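/- Let R be a proper circular-arc representation of a graph G, and let u, v be two vertices whose arcs R(u) and R(v) are in non-normal position. Then both u and v are universal vertices of G. -/
import Mathlib


open Set

noncomputable section

/-- The closed arc on the circle `AddCircle L` (circle of circumference `L`) whose
tail is `t` and which proceeds clockwise for length `len` (ending at its head
`t + len`). -/
def Arc (L : ℝ) (t : AddCircle L) (len : ℝ) : Set (AddCircle L) :=
  {x : AddCircle L | ∃ s : ℝ, 0 ≤ s ∧ s ≤ len ∧ x = t + (s : AddCircle L)}

/-- A circular-arc representation of the (finite simple) graph `G` on a circle of
circumference `L`: every vertex `v` gets a closed arc (recorded by its tail and its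
length, with `0 ≤ len v < L`), and two arcs of distinct vertices intersect iff the
vertices are adjacent. -/
structure CARep {V : Type*} (G : SimpleGraph V) (L : ℝ) where
  hL : 0 < L
  tail : V → AddCircle L
  len : V → ℝ
  len_nonneg : ∀ v, 0 ≤ len v
  len_lt : ∀ v, len v < L
  inter_iff : ∀ u v : V, u ≠ v →
    ((Arc L (tail u) (len u) ∩ Arc L (tail v) (len v)).Nonempty ↔ G.Adj u v)

namespace CARep

variable {V : Type*} {G : SimpleGraph V} {L : ℝ}

/-- The arc of vertex `v`. -/
def arc (R : CARep G L) (v : V) : Set (AddCircle L) := Arc L (R.tail v) (R.len v)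

/-- The head (clockwise endpoint) of the arc of `v`. -/
def head (R : CARep G L) (v : V) : AddCircle L := R.tail v + ((R.len v : ℝ) : AddCircle L)

/-- A representation is Helly if every nonempty family of pairwise intersecting arcs
has a common point. -/
def Helly (R : CARep G L) : Prop :=
  ∀ S : Set V, S.Nonempty → (∀ u ∈ S, ∀ v ∈ S, (R.arc u ∩ R.arc v).Nonempty) →
    (⋂ v ∈ S, R.arc v).Nonempty

/-- A representation is normal if the intersection of any two arcs is empty or
connected. -/
def Normal (R : CARep G L) : Prop :=
  ∀ u v : V, u ≠ v → IsPreconnected (R.arc u ∩ R.arc v)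

/-- A representation is proper if no arc is properly contained in another. -/
def Proper (R : CARep G L) : Prop := ∀ u v : V, ¬ R.arc u ⊂ R.arc v

/-- A representation is unit if every arc has length exactly one. -/
def IsUnit (R : CARep G L) : Prop := ∀ v, R.len v = 1

end CARep

/-- A partial circular-arc representation of `G`: a circular-arc representation of the
subgraph of `G` induced by the set `pre` of predrawn vertices.  (The fields `tail`/`len`
are total functions; only their values on `pre` are meaningful.) -/
structure PartialCARep {V : Type*} (G : SimpleGraph V) (L : ℝ) where
  hL : 0 < L
  pre : Set V
  tail : V → AddCircle L
  len : V → ℝ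
  len_nonneg : ∀ v ∈ pre, 0 ≤ len v
  len_lt : ∀ v ∈ pre, len v < L
  inter_iff : ∀ u ∈ pre, ∀ v ∈ pre, u ≠ v →
    ((Arc L (tail u) (len u) ∩ Arc L (tail v) (len v)).Nonempty ↔ G.Adj u v)

namespace PartialCARep

variable {V : Type*} {G : SimpleGraph V} {L : ℝ}

/-- The (predrawn) arc of vertex `v`. -/
def arc (R' : PartialCARep G L) (v : V) : Set (AddCircle L) := Arc L (R'.tail v) (R'.len v)

/-- The head (clockwise endpoint) of the predrawn arc of `v`. -/
def head (R' : PartialCARep G L) (v : V) : AddCircle L :=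
  R'.tail v + ((R'.len v : ℝ) : AddCircle L)

/-- The partial representation is Helly. -/
def Helly (R' : PartialCARep G L) : Prop :=
  ∀ S : Set V, S ⊆ R'.pre → S.Nonempty →
    (∀ u ∈ S, ∀ v ∈ S, (R'.arc u ∩ R'.arc v).Nonempty) →
    (⋂ v ∈ S, R'.arc v).Nonempty

/-- The partial representation is normal. -/
def Normal (R' : PartialCARep G L) : Prop :=
  ∀ u ∈ R'.pre, ∀ v ∈ R'.pre, u ≠ v → IsPreconnected (R'.arc u ∩ R'.arc v)

/-- The partial representation is proper. -/
def Proper (R' : PartialCARep G L) : Prop :=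
  ∀ u ∈ R'.pre, ∀ v ∈ R'.pre, ¬ R'.arc u ⊂ R'.arc v

/-- `Pre(C)`: the set of predrawn arcs of vertices of `C`. -/
def PreArcs (R' : PartialCARep G L) (C : Set V) : Set (Set (AddCircle L)) :=
  {A | ∃ v ∈ R'.pre ∩ C, A = R'.arc v}

/-- All predrawn arcs. -/
def AllArcs (R' : PartialCARep G L) : Set (Set (AddCircle L)) :=
  {A | ∃ v ∈ R'.pre, A = R'.arc v}

/-- `Reg⁺(C)`: the intersection of the arcs of `Pre(C)` (the whole circle if
`Pre(C) = ∅`). -/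
def RegPlus (R' : PartialCARep G L) (C : Set V) : Set (AddCircle L) := ⋂₀ R'.PreArcs C

/-- `Reg⁻(C)`: the union of the predrawn arcs not in `Pre(C)`. -/
def RegMinus (R' : PartialCARep G L) (C : Set V) : Set (AddCircle L) :=
  ⋃₀ (R'.AllArcs \ R'.PreArcs C)

/-- The region `Reg(C) = Reg⁺(C) \ Reg⁻(C)`. -/
def Reg (R' : PartialCARep G L) (C : Set V) : Set (AddCircle L) :=
  R'.RegPlus C \ R'.RegMinus C

/-- `J` is a gap of `C`: a connected component of the complement of `Reg(C)`. -/
def IsGap (R' : PartialCARep G L) (C : Set V) (J : Set (AddCircle L)) : Prop :=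
  ∃ x ∈ (R'.Reg C)ᶜ, J = connectedComponentIn (R'.Reg C)ᶜ x

end PartialCARep

/-- `R` extends the partial representation `R'`: predrawn vertices keep their arcs. -/
def CARep.Extends {V : Type*} {G : SimpleGraph V} {L : ℝ}
    (R : CARep G L) (R' : PartialCARep G L) : Prop :=
  ∀ v ∈ R'.pre, R.arc v = R'.arc v

/-- An interval representation of `G`: closed intervals `[lo v, hi v]` on the real
line, intersecting iff the vertices are adjacent. -/
structure IntervalRep {V : Type*} (G : SimpleGraph V) where
  lo : V → ℝ
  hi : V → ℝ
  lo_le_hi : ∀ v, lo v ≤ hi v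
  inter_iff : ∀ u v : V, u ≠ v →
    ((Set.Icc (lo u) (hi u) ∩ Set.Icc (lo v) (hi v)).Nonempty ↔ G.Adj u v)

/-- The interval of vertex `v`. -/
def IntervalRep.itv {V : Type*} {G : SimpleGraph V} (R : IntervalRep G) (v : V) : Set ℝ :=
  Set.Icc (R.lo v) (R.hi v)

/-- `C` is a maximal clique of `G`. -/
def IsMaxClique {V : Type*} (G : SimpleGraph V) (C : Set V) : Prop :=
  G.IsClique C ∧ ∀ D : Set V, G.IsClique D → C ⊆ D → C = D

/-- The closed neighborhood `N[v]`. -/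
def closedNbhd {V : Type*} (G : SimpleGraph V) (v : V) : Set V :=
  insert v {u | G.Adj v u}

/-- `v` is a universal vertex: adjacent to all other vertices. -/
def IsUniversalVertex {V : Type*} (G : SimpleGraph V) (v : V) : Prop :=
  ∀ w, w ≠ v → G.Adj v w

/-- `u, w` form a universal pair: they are adjacent and every vertex is adjacent
to `u` or to `w`. -/
def IsUniversalPair {V : Type*} (G : SimpleGraph V) (u w : V) : Prop :=
  G.Adj u w ∧ ∀ x, G.Adj u x ∨ G.Adj w x

/-- The cyclic interval of length `m` starting at `a` in `ZMod k`. -/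
def ZInterval {k : ℕ} (a : ZMod k) (m : ℕ) : Set (ZMod k) :=
  {x | ∃ i : ℕ, i < m ∧ x = a + (i : ZMod k)}

/-- `T` is consecutive in the cyclic ordering induced by the labelling `f`. -/
def CyclicConsec {α : Type*} {k : ℕ} (f : α → ZMod k) (T : Set α) : Prop :=
  ∃ (a : ZMod k) (m : ℕ), T = f ⁻¹' ZInterval a m

/-- The cyclic position (in `ZMod k`) of an element under the enumeration `e`;
this turns the linear ordering `e` into a cyclic ordering. -/
def zOrd {α : Type*} {k : ℕ} (e : α ≃ Fin k) (x : α) : ZMod k := ((e x : ℕ) : ZMod k)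

/-- Cyclic betweenness in `ZMod k`: starting at `a` and going forward one meets
`b` and then `c` within one revolution. -/
def ZBtw {k : ℕ} (a b c : ZMod k) : Prop :=
  ∃ s t : ℕ, s ≤ t ∧ t < k ∧ b = a + (s : ZMod k) ∧ c = a + (t : ZMod k)

/-- Cyclic betweenness on the circle: starting at `a` and going clockwise one meets
`b` and then `c` within one revolution. -/
def CBtw (L : ℝ) (a b c : AddCircle L) : Prop :=
  ∃ s t : ℝ, 0 ≤ s ∧ s ≤ t ∧ t < L ∧ b = a + (s : AddCircle L) ∧ c = a + (t : AddCircle L)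

/-- The position of the point `x` in the linear order of circle points obtained by
cutting the circle at the point `p`: the unique `s ∈ [0, L)` with `x = p + s`. -/
noncomputable def circPos (L : ℝ) (hL : 0 < L) (p x : AddCircle L) : ℝ :=
  haveI : Fact (0 < L) := ⟨hL⟩
  ((AddCircle.equivIco L 0) (x - p) : ℝ)

/-- Two arcs are in non-normal position: their intersection is nonempty and
disconnected. -/
def NonNormalPos {L : ℝ} (A B : Set (AddCircle L)) : Prop :=
  (A ∩ B).Nonempty ∧ ¬ IsPreconnected (A ∩ B)
lemma arc_eq_image {L : ℝ} (hL : 0 < L) {t : AddCircle L} {len : ℝ}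
    (h0 : 0 ≤ len) {p : AddCircle L} (hp : p ∉ Arc L t len) :
    ∃ a b : ℝ, 0 < a ∧ b < L ∧
      Arc L t len = (fun r : ℝ => p + (r : AddCircle L)) '' Icc a b := by
  haveI : Fact (0 < L) := ⟨hL⟩
  set τ : ℝ := ((AddCircle.equivIco L 0) (t - p) : ℝ) with hτdef
  have hmem0 := ((AddCircle.equivIco L 0) (t - p)).2
  have hmem : 0 ≤ τ ∧ τ < L := ⟨hmem0.1, by have := hmem0.2; linarith⟩
  have hcoe : ((τ : ℝ) : AddCircle L) = t - p := by
    have h := (AddCircle.equivIco L 0).symm_apply_apply (t - p)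
    rwa [AddCircle.equivIco, QuotientAddGroup.equivIcoMod_symm_apply] at h
  have ht : t = p + (τ : AddCircle L) := by rw [hcoe, add_sub_cancel]
  have hτpos : 0 < τ := by
    rcases lt_or_eq_of_le hmem.1 with h | h
    · exact h
    · exfalso; apply hp
      refine ⟨0, le_refl 0, h0, ?_⟩
      rw [ht, ← h]; simp
  have hlt : τ + len < L := by
    by_contra h
    push_neg at h
    apply hp
    refine ⟨L - τ, by linarith [hmem.2], by linarith, ?_⟩
    rw [ht, add_assoc, ← AddCircle.coe_add]
    have : (τ + (L - τ) : ℝ) = L := by ring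
    rw [this, AddCircle.coe_period, add_zero]
  refine ⟨τ, τ + len, hτpos, hlt, ?_⟩
  ext x
  constructor
  · rintro ⟨s, hs0, hsl, rfl⟩
    refine ⟨τ + s, ⟨le_add_of_nonneg_right hs0, by linarith⟩, ?_⟩
    show p + ((τ + s : ℝ) : AddCircle L) = t + (s : AddCircle L)
    rw [AddCircle.coe_add, ht, add_assoc]
  · rintro ⟨r, ⟨hr1, hr2⟩, rfl⟩
    refine ⟨r - τ, by linarith, by linarith, ?_⟩
    show p + ((r : ℝ) : AddCircle L) = t + ((r - τ : ℝ) : AddCircle L)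
    rw [ht, add_assoc, ← AddCircle.coe_add]
    congr 2
    ring

lemma preconnected_inter_of_not_cover {L : ℝ} (hL : 0 < L)
    {t₁ t₂ : AddCircle L} {l₁ l₂ : ℝ} (h1 : 0 ≤ l₁) (h2 : 0 ≤ l₂)
    {p : AddCircle L} (hp1 : p ∉ Arc L t₁ l₁) (hp2 : p ∉ Arc L t₂ l₂) :
    IsPreconnected (Arc L t₁ l₁ ∩ Arc L t₂ l₂) := by
  haveI : Fact (0 < L) := ⟨hL⟩
  obtain ⟨a, b, ha, hb, hA⟩ := arc_eq_image hL h1 hp1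
  obtain ⟨c, d, hc, hd, hB⟩ := arc_eq_image hL h2 hp2
  set g : ℝ → AddCircle L := fun r => p + (r : AddCircle L) with hg
  have hginj : ∀ r ∈ Ioo (0:ℝ) L, ∀ r' ∈ Ioo (0:ℝ) L, g r = g r' → r = r' := by
    intro r hr r' hr' h
    have h' : ((r : ℝ) : AddCircle L) = ((r' : ℝ) : AddCircle L) := by
      have := add_left_cancel h
      exact this
    rw [AddCircle.coe_eq_coe_iff_of_mem_Ico (a := 0)
      ⟨le_of_lt hr.1, by rw [zero_add]; exact hr.2⟩
      ⟨le_of_lt hr'.1, by rw [zero_add]; exact hr'.2⟩] at h'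
    exact h'
  have key : Arc L t₁ l₁ ∩ Arc L t₂ l₂ = g '' (Icc a b ∩ Icc c d) := by
    rw [hA, hB]
    apply Subset.antisymm
    · rintro x ⟨⟨r, hr, rfl⟩, ⟨r', hr', heq⟩⟩
      have hrI : r ∈ Ioo (0:ℝ) L := ⟨lt_of_lt_of_le ha hr.1, lt_of_le_of_lt hr.2 hb⟩
      have hrI' : r' ∈ Ioo (0:ℝ) L := ⟨lt_of_lt_of_le hc hr'.1, lt_of_le_of_lt hr'.2 hd⟩
      have : r' = r := hginj r' hrI' r hrI heq
      subst this
      exact ⟨r', ⟨hr, hr'⟩, rfl⟩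
    · rintro x ⟨r, ⟨hr1, hr2⟩, rfl⟩
      exact ⟨⟨r, hr1, rfl⟩, ⟨r, hr2, rfl⟩⟩
  rw [key, Icc_inter_Icc]
  exact isPreconnected_Icc.image g
    (continuous_const.add (AddCircle.continuous_mk' L)).continuousOn

/-- In a proper circular-arc representation, if the arcs of `u` and
`v` are in non-normal position then both `u` and `v` are universal vertices. -/
theorem proper_nonNormal_implies_universal {V : Type*} [Fintype V] (G : SimpleGraph V)
    (L : ℝ) (R : CARep G L) (hP : R.Proper) (u v : V) (huv : u ≠ v)
    (hnn : NonNormalPos (R.arc u) (R.arc v)) :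
    IsUniversalVertex G u ∧ IsUniversalVertex G v := by
  have hcov : R.arc u ∪ R.arc v = Set.univ := by
    by_contra h
    have : ∃ p, p ∉ R.arc u ∪ R.arc v := by
      by_contra h'
      push_neg at h'
      exact h (eq_univ_iff_forall.mpr h')
    obtain ⟨p, hp⟩ := this
    exact hnn.2 (preconnected_inter_of_not_cover R.hL (R.len_nonneg u) (R.len_nonneg v)
      (fun hx => hp (Or.inl hx)) (fun hx => hp (Or.inr hx)))
  obtain ⟨q, hqu, hqv⟩ := hnn.1
  have hadj : G.Adj u v := (R.inter_iff u v huv).mp hnn.1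
  have key : ∀ w, w ≠ u → w ≠ v → G.Adj u w ∧ G.Adj v w := by
    intro w hwu hwv
    constructor
    · by_contra hA
      have hempty : ∀ x, x ∈ R.arc w → x ∉ R.arc u := by
        intro x hxw hxu
        exact hA (((R.inter_iff u w (Ne.symm hwu)).mp ⟨x, hxu, hxw⟩))
      have hsub : R.arc w ⊆ R.arc v := by
        intro x hx
        have : x ∈ R.arc u ∪ R.arc v := by rw [hcov]; trivial
        rcases this with h' | h'
        · exact absurd h' (hempty x hx)
        · exact h'
      exact hP w v ⟨hsub, fun hsub' => hempty q (hsub' hqv) hqu⟩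
    · by_contra hA
      have hempty : ∀ x, x ∈ R.arc w → x ∉ R.arc v := by
        intro x hxw hxv
        exact hA (((R.inter_iff v w (Ne.symm hwv)).mp ⟨x, hxv, hxw⟩))
      have hsub : R.arc w ⊆ R.arc u := by
        intro x hx
        have : x ∈ R.arc u ∪ R.arc v := by rw [hcov]; trivial
        rcases this with h' | h'
        · exact h'
        · exact absurd h' (hempty x hx)
      exact hP w u ⟨hsub, fun hsub' => hempty q (hsub' hqu) hqv⟩
  constructor
  · intro w hw
    by_cases hwv : w = v
    · subst hwv; exact hadj
    · exact (key w hw hwv).1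
  · intro w hw
    by_cases hwu : w = u
    · subst hwu; exact hadj.symm
    · exact (key w hwu hw).2
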